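/- (Existence and uniqueness of the equilibrium reinsurance premium, Proposition 4.2.) Let A > 0, C > 0, C₂ > 0, β > 0, and let L = ( −(2C−1) + √((2C−1)² + 8C) )/2. Then there exists a unique pair (ξ̄₁, ξ̄₂) of positive real numbers simultaneously satisfying C·A/ξ̄₁ = G( β·ξ̄₂·(1/A + 1/(2ξ̄₁)) ) and ξ̄₂ = (A/β)·( 1 + C₂ − A/(A + 2ξ̄₁) ); moreover ξ̄₁ lies in the open interval ( C·A/L, A·(2C+1)/2 ). -/

import Mathlib

/-- The function e(x) = (2/x²)·eˣ − (1 + 2/x + 2/x²). -/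
noncomputable def eFun (x : ℝ) : ℝ :=
  2 / x ^ 2 * Real.exp x - (1 + 2 / x + 2 / x ^ 2)

/-- The function g(x) for a parameter C. -/
noncomputable def gFun (C x : ℝ) : ℝ :=
  (1 / 2) * (-(2 * C - 1 + x * (2 * C + 1)) +
    Real.sqrt ((2 * C - 1 + x * (2 * C + 1)) ^ 2 + 8 * C * (x + 1)))

/-- The composite G = g ∘ e. -/
noncomputable def GFun (C x : ℝ) : ℝ := gFun C (eFun x)
/-!
Put `y = C·A/ξ₁`. Eliminating `ξ₂` through the second condition turns the argument of `G`
into `1 + C₂ + C₂·y/(2C)`, so equilibria correspond to positive fixed points of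
`y ↦ G(1 + C₂ + C₂·y/(2C))`. This map is decreasing: `e` is increasing, and `g` is decreasing
because on its range `(2C/(2C+1), 1)` it inverts `y ↦ (1 - y)(y + 2C)/((2C+1)y - 2C)`, which is
`(k/u - u + 1 - k)/(2C+1)²` in `u = (2C+1)y - 2C`, `k = 4C(C+1)`. Hence there is exactly one fixed
point, found by the intermediate value theorem on `[0, 1]`. The range of `g` gives the bounds on
`ξ₁`, since `L = 1`.
-/

open Real Set

lemma one_sub_mul_exp_lt_one {x : ℝ} (hx : x ≠ 0) : (1 - x) * exp x < 1 := by
  have h := add_one_lt_exp (neg_ne_zero.2 hx)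
  calc (1 - x) * exp x < exp (-x) * exp x := by
        rcases lt_or_ge x 1 with h1 | h1
        · exact mul_lt_mul_of_pos_right (by linarith) (exp_pos x)
        · nlinarith [exp_pos x, exp_pos (-x)]
    _ = 1 := by rw [← exp_add, neg_add_cancel, exp_zero]

lemma eFun_eq {x : ℝ} (hx : x ≠ 0) :
    eFun x = (2 * exp x - (x ^ 2 + 2 * x + 2)) / x ^ 2 := by
  unfold eFun; field_simp

lemma eFun_pos {x : ℝ} (hx : 0 < x) : 0 < eFun x := by
  have h := sum_le_exp_of_nonneg hx.le 4
  simp only [Finset.sum_range_succ, Finset.sum_range_zero, Nat.factorial] at h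
  rw [eFun_eq hx.ne']
  refine div_pos ?_ (by positivity)
  norm_num at h
  nlinarith [pow_pos hx 3]

lemma hasDerivAt_eFun {x : ℝ} (hx : x ≠ 0) :
    HasDerivAt eFun (2 / x ^ 3 * ((x - 2) * exp x + x + 2)) x := by
  have hx2 := pow_ne_zero 2 hx
  have hd : HasDerivAt (fun x => 2 / x ^ 2 * exp x - (1 + 2 / x + 2 / x ^ 2)) _ x :=
    (((hasDerivAt_const x 2).div (hasDerivAt_pow 2 x) hx2).mul (hasDerivAt_exp x)).sub
      (((hasDerivAt_const x 1).add ((hasDerivAt_const x 2).div (hasDerivAt_id' x) hx)).add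
        ((hasDerivAt_const x 2).div (hasDerivAt_pow 2 x) hx2))
  unfold eFun
  refine hd.congr_deriv ?_
  simp only [Pi.div_apply]
  field_simp
  ring

lemma strictMonoOn_sub_two_mul_exp : StrictMonoOn (fun x => (x - 2) * exp x + x + 2) (Ici 0) := by
  refine strictMonoOn_of_deriv_pos (convex_Ici 0) (by fun_prop) fun x hx => ?_
  rw [interior_Ici] at hx
  have hd : HasDerivAt (fun x => (x - 2) * exp x + x + 2) ((x - 2) * exp x + exp x + 1) x :=
    ((((hasDerivAt_id' x).sub_const 2).mul (hasDerivAt_exp x)).add (hasDerivAt_id' x)).add_const 2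
      |>.congr_deriv (by ring)
  rw [hd.deriv]
  linarith [one_sub_mul_exp_lt_one (ne_of_gt hx)]

lemma continuousOn_eFun : ContinuousOn eFun (Ioi 0) :=
  fun _ hx => (hasDerivAt_eFun (ne_of_gt hx)).continuousAt.continuousWithinAt

lemma strictMonoOn_eFun : StrictMonoOn eFun (Ioi 0) := by
  refine strictMonoOn_of_deriv_pos (convex_Ioi 0) continuousOn_eFun fun x hx => ?_
  rw [interior_Ioi, mem_Ioi] at hx
  rw [(hasDerivAt_eFun (ne_of_gt hx)).deriv]
  have := strictMonoOn_sub_two_mul_exp (self_mem_Ici) (mem_Ici.2 (le_of_lt hx)) hx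
  norm_num at this
  exact mul_pos (by positivity) this

section gFun

variable {C s : ℝ}

-- `gFun C s` is a root of `y² + (2C - 1 + s(2C + 1)) y - 2C(s + 1)`, which factors as
-- `(y - 1)(y + 2C) + s((2C + 1) y - 2C)`.
lemma mul_sub_eq_gFun (hC : 0 < C) (hs : 0 ≤ s) :
    s * ((2 * C + 1) * gFun C s - 2 * C) = (1 - gFun C s) * (gFun C s + 2 * C) := by
  have h := sq_sqrt (show 0 ≤ (2 * C - 1 + s * (2 * C + 1)) ^ 2 + 8 * C * (s + 1) by positivity)
  unfold gFun
  linear_combination (1 / 4 : ℝ) * h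

lemma gFun_pos (hC : 0 < C) (hs : 0 ≤ s) : 0 < gFun C s := by
  have hb : 2 * C - 1 + s * (2 * C + 1) <
      √((2 * C - 1 + s * (2 * C + 1)) ^ 2 + 8 * C * (s + 1)) :=
    lt_sqrt_of_sq_lt (by nlinarith)
  unfold gFun
  linarith

lemma gFun_mem_Ioo (hC : 0 < C) (hs : 0 < s) : gFun C s ∈ Ioo (2 * C / (2 * C + 1)) 1 := by
  have key := mul_sub_eq_gFun hC hs.le
  have hy := gFun_pos hC hs.le
  rw [mem_Ioo, div_lt_iff₀ (by positivity)]
  constructor <;> by_contra! h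
  · have hd : (2 * C + 1) * gFun C s - 2 * C ≤ 0 := by linarith
    nlinarith [mul_nonpos_of_nonneg_of_nonpos hs.le hd]
  · have hd : 0 < (2 * C + 1) * gFun C s - 2 * C := by nlinarith
    nlinarith [mul_pos hs hd]

noncomputable def gInv (C y : ℝ) : ℝ := (1 - y) * (y + 2 * C) / ((2 * C + 1) * y - 2 * C)

lemma gInv_gFun (hC : 0 < C) (hs : 0 < s) : gInv C (gFun C s) = s := by
  have hd : 0 < (2 * C + 1) * gFun C s - 2 * C := by
    have := (gFun_mem_Ioo hC hs).1
    rw [div_lt_iff₀ (by positivity)] at this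
    linarith
  rw [gInv, div_eq_iff hd.ne', mul_sub_eq_gFun hC hs.le]

lemma gInv_eq (hC : 0 < C) {y : ℝ} (hy : (2 * C + 1) * y - 2 * C ≠ 0) :
    gInv C y = (4 * C * (C + 1) / ((2 * C + 1) * y - 2 * C) - ((2 * C + 1) * y - 2 * C)
      + 1 - 4 * C * (C + 1)) / (2 * C + 1) ^ 2 := by
  rw [gInv, div_eq_div_iff hy (by positivity), sub_add, sub_sub, div_sub' hy,
    div_mul_eq_mul_div, eq_div_iff hy]
  ring

lemma strictAntiOn_gInv (hC : 0 < C) : StrictAntiOn (gInv C) (Ioi (2 * C / (2 * C + 1))) := by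
  intro a ha b hb hab
  rw [mem_Ioi, div_lt_iff₀ (by positivity)] at ha hb
  rw [gInv_eq hC (by linarith), gInv_eq hC (by linarith)]
  gcongr
  linarith

lemma strictAntiOn_gFun (hC : 0 < C) : StrictAntiOn (gFun C) (Ioi 0) := by
  intro s hs t ht hst
  by_contra! h
  have := (strictAntiOn_gInv hC).le_iff_ge (gFun_mem_Ioo hC ht).1 (gFun_mem_Ioo hC hs).1 |>.2 h
  rw [gInv_gFun hC hs, gInv_gFun hC ht] at this
  linarith

lemma continuous_gFun (C : ℝ) : Continuous (gFun C) := by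
  unfold gFun
  fun_prop

end gFun

lemma existsUnique_pos_eq_of_antitoneOn {f : ℝ → ℝ} (hcont : ContinuousOn f (Icc 0 1))
    (hanti : AntitoneOn f (Ioi 0)) (h0 : 0 < f 0) (h1 : f 1 < 1) : ∃! y, 0 < y ∧ y = f y := by
  obtain ⟨y, hy, hfy⟩ := intermediate_value_Ioo zero_le_one (continuousOn_id.sub hcont)
    (show (0 : ℝ) ∈ Ioo (0 - f 0) (1 - f 1) from ⟨by linarith, by linarith⟩)
  have hfix : ∀ z w, 0 < z → z = f z → 0 < w → w = f w → z ≤ w :=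
    fun z w hz hfz hw hfw => not_lt.1 fun h => h.not_ge (hfz ▸ hfw ▸ hanti hw hz h.le)
  have hfy : y = f y := eq_of_sub_eq_zero hfy
  exact ⟨y, ⟨hy.1, hfy⟩, fun z ⟨hz, hfz⟩ =>
    le_antisymm (hfix z y hz hfz hy.1 hfy) (hfix y z hy.1 hfy hz hfz)⟩

lemma strictAntiOn_GFun {C : ℝ} (hC : 0 < C) : StrictAntiOn (GFun C) (Ioi 0) :=
  (strictAntiOn_gFun hC).comp_strictMonoOn strictMonoOn_eFun fun _ hx => eFun_pos hx

lemma continuousOn_GFun (C : ℝ) : ContinuousOn (GFun C) (Ioi 0) :=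
  (continuous_gFun C).comp_continuousOn continuousOn_eFun

lemma existsUnique_pos_eq_GFun {C a b : ℝ} (hC : 0 < C) (ha : 0 < a) (hb : 0 ≤ b) :
    ∃! y, 0 < y ∧ y = GFun C (a + b * y) := by
  have hmaps : ∀ y, 0 ≤ y → a + b * y ∈ Ioi 0 := fun y hy => by
    rw [mem_Ioi]; positivity
  refine existsUnique_pos_eq_of_antitoneOn ?_ ?_ ?_ ?_
  · exact (continuousOn_GFun C).comp (by fun_prop) fun y hy => hmaps y hy.1
  · exact (strictAntiOn_GFun hC).antitoneOn.comp_MonotoneOn (fun y _ z _ h => by gcongr)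
      fun y hy => hmaps y (le_of_lt hy)
  · exact gFun_pos hC (eFun_pos (hmaps 0 le_rfl)).le
  · exact (gFun_mem_Ioo hC (eFun_pos (hmaps 1 zero_le_one))).2

lemma foc_argument_eq {A β C C₂ ξ : ℝ} (hA : 0 < A) (hβ : β ≠ 0) (hC : C ≠ 0)
    (hξ : 0 < ξ) :
    β * ((A / β) * (1 + C₂ - A / (A + 2 * ξ))) * (1 / A + 1 / (2 * ξ))
      = 1 + C₂ + C₂ / (2 * C) * (C * A / ξ) := by
  have : A + 2 * ξ ≠ 0 := by positivity
  field_simp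
  ring

/-- **Proposition 4.2.** There exists a unique positive pair (ξ̄₁, ξ̄₂)
simultaneously satisfying C·A/ξ̄₁ = G(β·ξ̄₂·(1/A + 1/(2ξ̄₁))) and
ξ̄₂ = (A/β)·(1 + C₂ − A/(A + 2ξ̄₁)); moreover ξ̄₁ ∈ (C·A/L, A(2C+1)/2). -/
theorem stmt_14 (A C C₂ β : ℝ) (hA : 0 < A) (hC : 0 < C) (hC₂ : 0 < C₂) (hβ : 0 < β) :
    (∃! p : ℝ × ℝ, 0 < p.1 ∧ 0 < p.2 ∧
        C * A / p.1 = GFun C (β * p.2 * (1 / A + 1 / (2 * p.1))) ∧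
        p.2 = (A / β) * (1 + C₂ - A / (A + 2 * p.1))) ∧
    (∀ p : ℝ × ℝ, 0 < p.1 → 0 < p.2 →
        C * A / p.1 = GFun C (β * p.2 * (1 / A + 1 / (2 * p.1))) →
        p.2 = (A / β) * (1 + C₂ - A / (A + 2 * p.1)) →
        C * A / ((-(2 * C - 1) + Real.sqrt ((2 * C - 1) ^ 2 + 8 * C)) / 2) < p.1 ∧
        p.1 < A * (2 * C + 1) / 2) := by
  have hL : (-(2 * C - 1) + √((2 * C - 1) ^ 2 + 8 * C)) / 2 = 1 := by
    rw [show (2 * C - 1) ^ 2 + 8 * C = (2 * C + 1) ^ 2 by ring, sqrt_sq (by positivity)]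
    ring
  have hreduce : ∀ p : ℝ × ℝ, 0 < p.1 → p.2 = (A / β) * (1 + C₂ - A / (A + 2 * p.1)) →
      β * p.2 * (1 / A + 1 / (2 * p.1)) = 1 + C₂ + C₂ / (2 * C) * (C * A / p.1) :=
    fun p hp h2 => h2 ▸ foc_argument_eq hA hβ.ne' hC.ne' hp
  have hslope : 0 ≤ C₂ / (2 * C) := by positivity
  obtain ⟨y, ⟨hy, hfix⟩, huniq⟩ :=
    existsUnique_pos_eq_GFun hC (a := 1 + C₂) (by positivity) hslope
  refine ⟨⟨(C * A / y, (A / β) * (1 + C₂ - A / (A + 2 * (C * A / y)))), ?_, ?_⟩, ?_⟩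
  · have hfrac : A / (A + 2 * (C * A / y)) < 1 := (div_lt_one (by positivity)).2 (by
      have : 0 < C * A / y := by positivity
      linarith)
    refine ⟨by positivity, mul_pos (by positivity) (by linarith), ?_, rfl⟩
    rw [hreduce _ (by positivity) rfl, div_div_cancel₀ (by positivity)]
    exact hfix
  · rintro p ⟨hp1, -, h1, h2⟩
    rw [hreduce p hp1 h2] at h1
    have hp1y : C * A / p.1 = y := huniq _ ⟨by positivity, h1⟩
    have hp1 : p.1 = C * A / y := by rw [← hp1y, div_div_cancel₀ (by positivity)]
    exact Prod.ext hp1 (h2.trans (by rw [hp1]))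
  · rintro p hp1 - h1 h2
    rw [hreduce p hp1 h2] at h1
    have harg : 0 < 1 + C₂ + C₂ / (2 * C) * (C * A / p.1) := by positivity
    have hmem := gFun_mem_Ioo hC (eFun_pos harg)
    rw [← GFun, ← h1, mem_Ioo, div_lt_div_iff₀ (by positivity) hp1, div_lt_one hp1] at hmem
    rw [hL, div_one, lt_div_iff₀ two_pos]
    exact ⟨hmem.2, by nlinarith⟩
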